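/- arXiv:2508.11840 — 8 statements merged into one kernel-verified Lean document; each statement's English description precedes it below -/
import Mathlib

section
/- Let E = EuclideanSpace ℝ (Fin 3), let t, m, n : ℝ → E, let κ_g, κ_n, τ_g, g_t, g_m : ℝ → ℝ, and let α ∈ ℝ. Assume t, m, g_t, g_m are differentiable at α; that at α one has ⟪t α, n α⟫ = 0, ⟪m α, n α⟫ = 0, ⟪n α, n α⟫ = 1; and that the structure equations deriv t α = κ_g α • m α + κ_n α • n α and deriv m α = −(κ_g α) • t α + τ_g α • n α hold. Define g : ℝ → E by g s = g_t s • t s + g_m s • m s. If ⟪deriv g α, n α⟫ = 0, then g_t α * κ_n α + g_m α * τ_g α = 0. -/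
open scoped RealInnerProductSpace

section FrameDerivative

variable {E : Type*} [NormedAddCommGroup E] [InnerProductSpace ℝ E]
  {a b : ℝ → ℝ} {u v : ℝ → E} {α : ℝ}

theorem deriv_smul_add_smul (ha : DifferentiableAt ℝ a α) (hu : DifferentiableAt ℝ u α)
    (hb : DifferentiableAt ℝ b α) (hv : DifferentiableAt ℝ v α) :
    deriv (fun s => a s • u s + b s • v s) α =
      a α • deriv u α + deriv a α • u α + (b α • deriv v α + deriv b α • v α) :=
  ((ha.hasDerivAt.smul hu.hasDerivAt).add (hb.hasDerivAt.smul hv.hasDerivAt)).deriv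

theorem inner_deriv_smul_add_smul (ha : DifferentiableAt ℝ a α) (hu : DifferentiableAt ℝ u α)
    (hb : DifferentiableAt ℝ b α) (hv : DifferentiableAt ℝ v α) (w : E) :
    ⟪deriv (fun s => a s • u s + b s • v s) α, w⟫ =
      a α * ⟪deriv u α, w⟫ + deriv a α * ⟪u α, w⟫ +
        (b α * ⟪deriv v α, w⟫ + deriv b α * ⟪v α, w⟫) := by
  simp only [deriv_smul_add_smul ha hu hb hv, inner_add_left, real_inner_smul_left]

end FrameDerivative

/-- Equation (K=0) of the paper: the developability condition `g'·n = 0` for the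
ruling direction `g = g_t t + g_m m` along the Darboux frame `{t, m, n}` implies
`g_t κ_n + g_m τ_g = 0`. -/
theorem stmt0
    (t m n : ℝ → EuclideanSpace ℝ (Fin 3))
    (κg κn τg gt gm : ℝ → ℝ) (α : ℝ)
    (ht : DifferentiableAt ℝ t α) (hm : DifferentiableAt ℝ m α)
    (hgt : DifferentiableAt ℝ gt α) (hgm : DifferentiableAt ℝ gm α)
    (htn : ⟪t α, n α⟫ = 0) (hmn : ⟪m α, n α⟫ = 0) (hnn : ⟪n α, n α⟫ = 1)
    (hderivt : deriv t α = κg α • m α + κn α • n α)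
    (hderivm : deriv m α = -(κg α) • t α + τg α • n α)
    (g : ℝ → EuclideanSpace ℝ (Fin 3))
    (hg : ∀ s, g s = gt s • t s + gm s • m s)
    (hgn : ⟪deriv g α, n α⟫ = 0) :
    gt α * κn α + gm α * τg α = 0 := by
  rw [funext hg, inner_deriv_smul_add_smul hgt ht hgm hm, hderivt, hderivm] at hgn
  simp only [inner_add_left, real_inner_smul_left, htn, hmn, hnn] at hgn
  linarith
end

section
/- Let E = EuclideanSpace ℝ (Fin 3), let t, m, n : ℝ → E, let κ_g, κ_n, τ_g, g_t, g_m : ℝ → ℝ, and let α ∈ ℝ. Assume t, m, g_t, g_m are differentiable at α; at α the frame is orthonormal: ⟪t α, t α⟫ = ⟪m α, m α⟫ = ⟪n α, n α⟫ = 1 and ⟪t α, m α⟫ = ⟪t α, n α⟫ = ⟪m α, n α⟫ = 0; the structure equations deriv t α = κ_g α • m α + κ_n α • n α and deriv m α = −(κ_g α) • t α + τ_g α • n α hold; g_t s ^ 2 + g_m s ^ 2 = 1 for all s in some neighborhood of α; and g_t α * κ_n α + g_m α * τ_g α = 0. Define g : ℝ → E by g s = g_t s • t s + g_m s • m s and set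 G = κ_g α − g_m α * deriv g_t α + g_t α * deriv g_m α. Then deriv g α = −G • (g_m α • t α − g_t α • m α), and ‖deriv g α‖ = |G|. -/
open scoped RealInnerProductSpace

/-- Equations (g'rep2) and (g'repc) of the paper: along the Darboux frame `{t, m, n}`,
the derivative of the unit ruling direction `g = g_t t + g_m m` (with
`g_t² + g_m² = 1` and the developability condition `g_t κ_n + g_m τ_g = 0`) is
`g' = −G (g_m t − g_t m)` with `|g'| = |G|`, where
`G = κ_g − g_m g_t' + g_t g_m'`. -/
theorem stmt1
    (t m n : ℝ → EuclideanSpace ℝ (Fin 3))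
    (κg κn τg gt gm : ℝ → ℝ) (α : ℝ)
    (ht : DifferentiableAt ℝ t α) (hm : DifferentiableAt ℝ m α)
    (hgt : DifferentiableAt ℝ gt α) (hgm : DifferentiableAt ℝ gm α)
    (htt : ⟪t α, t α⟫ = 1) (hmm : ⟪m α, m α⟫ = 1) (hnn : ⟪n α, n α⟫ = 1)
    (htm : ⟪t α, m α⟫ = 0) (htn : ⟪t α, n α⟫ = 0) (hmn : ⟪m α, n α⟫ = 0)
    (hderivt : deriv t α = κg α • m α + κn α • n α)
    (hderivm : deriv m α = -(κg α) • t α + τg α • n α)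
    (hunit : ∀ᶠ s in nhds α, gt s ^ 2 + gm s ^ 2 = 1)
    (hdev : gt α * κn α + gm α * τg α = 0)
    (g : ℝ → EuclideanSpace ℝ (Fin 3))
    (hg : ∀ s, g s = gt s • t s + gm s • m s)
    (G : ℝ) (hG : G = κg α - gm α * deriv gt α + gt α * deriv gm α) :
    deriv g α = -G • (gm α • t α - gt α • m α) ∧ ‖deriv g α‖ = |G| := by

  have hsum : gt α ^ 2 + gm α ^ 2 = 1 := hunit.self_of_nhds
  have hd' : gt α * deriv gt α + gm α * deriv gm α = 0 := by
    have h2 : HasDerivAt (fun s => gt s ^ 2 + gm s ^ 2)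
        ((2 : ℕ) * gt α ^ 1 * deriv gt α + (2 : ℕ) * gm α ^ 1 * deriv gm α) α :=
      (hgt.hasDerivAt.pow 2).add (hgm.hasDerivAt.pow 2)
    have h1 : deriv (fun s => gt s ^ 2 + gm s ^ 2) α = deriv (fun _ => (1 : ℝ)) α :=
      Filter.EventuallyEq.deriv_eq hunit
    rw [h2.deriv, deriv_const] at h1
    push_cast at h1
    nlinarith [h1]
  have hgd : HasDerivAt g
      ((gt α • deriv t α + deriv gt α • t α) + (gm α • deriv m α + deriv gm α • m α)) α := by
    have : g = fun s => gt s • t s + gm s • m s := funext hg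
    rw [this]
    exact (hgt.hasDerivAt.smul ht.hasDerivAt).add (hgm.hasDerivAt.smul hm.hasDerivAt)
  have heq : deriv g α = -G • (gm α • t α - gt α • m α) := by
    rw [hgd.deriv, hderivt, hderivm]
    subst hG
    match_scalars
    · linear_combination gm α * hd' - deriv gm α * hsum
    · linear_combination hdev
    · linear_combination gt α * hd' - deriv gt α * hsum
  refine ⟨heq, ?_⟩
  rw [heq]
  have hv : ‖gm α • t α - gt α • m α‖ = 1 := by
    have hinner : ⟪gm α • t α - gt α • m α, gm α • t α - gt α • m α⟫ = 1 := by
      simp only [inner_sub_left, inner_sub_right, real_inner_smul_left, real_inner_smul_right]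
      have hmt : ⟪m α, t α⟫ = 0 := by rw [real_inner_comm]; exact htm
      rw [htt, hmm, hmt, htm]
      nlinarith [hsum]
    have h2 := real_inner_self_eq_norm_sq (gm α • t α - gt α • m α)
    rw [hinner] at h2
    nlinarith [norm_nonneg (gm α • t α - gt α • m α), h2]
  rw [norm_smul, hv, mul_one, Real.norm_eq_abs, abs_neg]
end

section
/- Let ℝ³ = Fin 3 → ℝ with the Euclidean dot product ⟪u, v⟫ = ∑ i, u i * v i and cross product ×. Let t, m ∈ ℝ³ with ⟪t, t⟫ = 1, ⟪m, m⟫ = 1, ⟪t, m⟫ = 0, and set n = t × m. Let κ_n, g_t, g_m ∈ ℝ with g_m > 0 and g_t ^ 2 + g_m ^ 2 = 1, set τ_g = −κ_n * g_t / g_m, ν' = −κ_n • t − τ_g • m, and g = g_t • t + g_m • m. Then ν' × n = (κ_n / g_m) • g; moreover, if κ_n ≠ 0, then g = (Real.sign κ_n) • (Real.sqrt ⟪ν' × n, ν' × n⟫)⁻¹ • (ν' × n). -/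
/-!
Since `t × (t × m) = -m` and `m × (t × m) = t`, bilinearity gives `ν' × n = κ_n m - τ_g t`,
which is `(κ_n / g_m) g` for the developability value of `τ_g`. As `g` is a unit vector,
`|ν' × n| = |κ_n| / g_m`, so normalising `ν' × n` recovers `g` up to the sign of `κ_n`.
-/

open Matrix

/-- The Euclidean dot product on `Fin 3 → ℝ`. -/
def dot3 (u v : Fin 3 → ℝ) : ℝ := ∑ i, u i * v i

theorem dot3_eq_dotProduct (u v : Fin 3 → ℝ) : dot3 u v = u ⬝ᵥ v := rfl

theorem Real.sign_mul_self (r : ℝ) : Real.sign r * r = |r| := by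
  rcases lt_trichotomy r 0 with h | rfl | h
  · rw [Real.sign_of_neg h, abs_of_neg h, neg_one_mul]
  · simp
  · rw [Real.sign_of_pos h, abs_of_pos h, one_mul]

section
variable {R : Type*} [CommRing R] {t m : Fin 3 → R}

theorem cross_cross_self_left_of_orthonormal (ht : t ⬝ᵥ t = 1) (htm : t ⬝ᵥ m = 0) :
    t ⨯₃ (t ⨯₃ m) = -m := by
  rw [cross_cross_eq_smul_sub_smul', htm, ht, zero_smul, one_smul, zero_sub]

theorem cross_cross_self_right_of_orthonormal (hm : m ⬝ᵥ m = 1) (htm : t ⬝ᵥ m = 0) :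
    m ⨯₃ (t ⨯₃ m) = t := by
  rw [cross_cross_eq_smul_sub_smul', hm, htm, zero_smul, one_smul, sub_zero]

theorem dotProduct_self_add_smul_of_orthonormal (ht : t ⬝ᵥ t = 1) (hm : m ⬝ᵥ m = 1)
    (htm : t ⬝ᵥ m = 0) (a b : R) :
    (a • t + b • m) ⬝ᵥ (a • t + b • m) = a ^ 2 + b ^ 2 := by
  simp only [add_dotProduct, dotProduct_add, smul_dotProduct, dotProduct_smul, ht, hm, htm,
    dotProduct_comm m t, smul_eq_mul]
  ring
end

theorem Real.sqrt_dotProduct_smul_self {ι : Type*} [Fintype ι] {v : ι → ℝ} (hv : v ⬝ᵥ v = 1)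
    (c : ℝ) : √((c • v) ⬝ᵥ (c • v)) = |c| := by
  rw [smul_dotProduct, dotProduct_smul, hv, smul_eq_mul, smul_eq_mul, mul_one,
    ← Real.sqrt_mul_self_eq_abs]

/-- Equations (grepm) and (defgp0) of the paper: with `{t, m, n = t × m}`
orthonormal, `n' = ν' = −κ_n t − τ_g m` where `τ_g = −κ_n g_t / g_m`, and
`g = g_t t + g_m m` the unit ruling direction (`g_t² + g_m² = 1`, `g_m > 0`),
one has `ν' × n = (κ_n / g_m) g`; hence if `κ_n ≠ 0`, the ruling direction is
recovered as `g = sgn(κ_n) (ν' × n)/|ν' × n|`. -/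
theorem stmt5 (t m : Fin 3 → ℝ)
    (htt : dot3 t t = 1) (hmm : dot3 m m = 1) (htm : dot3 t m = 0)
    (n : Fin 3 → ℝ) (hn : n = t ⨯₃ m)
    (κn gt gm : ℝ) (hgm : 0 < gm) (hunit : gt ^ 2 + gm ^ 2 = 1)
    (τg : ℝ) (hτ : τg = -κn * gt / gm)
    (ν' g : Fin 3 → ℝ)
    (hν : ν' = -κn • t - τg • m)
    (hg : g = gt • t + gm • m) :
    ν' ⨯₃ n = (κn / gm) • g ∧
      (κn ≠ 0 →
        g = Real.sign κn • (Real.sqrt (dot3 (ν' ⨯₃ n) (ν' ⨯₃ n)))⁻¹ • (ν' ⨯₃ n)) := by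
  rw [dot3_eq_dotProduct] at htt hmm htm ⊢
  have hcross : ν' ⨯₃ n = (κn / gm) • g := by
    rw [hν, hn, hg, map_sub, LinearMap.sub_apply, map_smul, map_smul, LinearMap.smul_apply,
      LinearMap.smul_apply, cross_cross_self_left_of_orthonormal htt htm,
      cross_cross_self_right_of_orthonormal hmm htm, hτ]
    match_scalars <;> field_simp
  have hg_unit : g ⬝ᵥ g = 1 := by
    rw [hg, dotProduct_self_add_smul_of_orthonormal htt hmm htm, hunit]
  refine ⟨hcross, fun hκ => ?_⟩
  rw [hcross, Real.sqrt_dotProduct_smul_self hg_unit, smul_smul, smul_smul, abs_div,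
    abs_of_pos hgm]
  have hscalar : Real.sign κn * (|κn| / gm)⁻¹ * (κn / gm) = 1 := by
    rw [mul_assoc, inv_div, mul_comm (gm / _), div_mul_div_cancel₀ hgm.ne', ← mul_div_assoc,
      Real.sign_mul_self, div_self (abs_ne_zero.mpr hκ)]
  rw [hscalar, one_smul]
end

section
/- Let E = EuclideanSpace ℝ (Fin 3), let T, M, t, m, n : ℝ → E, let κ_c, κ_n, τ_g : ℝ → ℝ, let α₀ ∈ ℝ, and let v ∈ E. Assume T, M, t, m are differentiable at α₀ and that at α₀ the structure equations hold: deriv T α₀ = κ_c α₀ • M α₀, deriv M α₀ = −(κ_c α₀) • T α₀, deriv t α₀ = κ_c α₀ • m α₀ + κ_n α₀ • n α₀, and deriv m α₀ = −(κ_c α₀) • t α₀ + τ_g α₀ • n α₀. Then deriv (fun s => ⟪T s, v⟫ • t s + ⟪M s, v⟫ • m s) α₀ = (κ_n α₀ * ⟪T α₀, v⟫ + τ_g α₀ * ⟪M α₀, v⟫) • n α₀. -/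
open scoped RealInnerProductSpace

/-!
The derivative of `Q v = ⟪T, v⟫ t + ⟪M, v⟫ m` is, by the product rule,
`⟪T', v⟫ t + ⟪T, v⟫ t' + ⟪M', v⟫ m + ⟪M, v⟫ m'`. Inserting the structure equations, the
in-plane terms `κ_c ⟪M, v⟫ t + κ_c ⟪T, v⟫ m` coming from `T'` and `t'` cancel those coming from
`M'` and `m'`, precisely because the geodesic curvature of the image equals `κ_c`; only the
normal components `κ_n ⟪T, v⟫ n + τ_g ⟪M, v⟫ n` survive.
-/

section

variable {E F : Type*} [NormedAddCommGroup E] [InnerProductSpace ℝ E]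
  [NormedAddCommGroup F] [InnerProductSpace ℝ F]

theorem HasDerivAt.inner_const_right {f : ℝ → E} {f' : E} {x : ℝ} (hf : HasDerivAt f f' x)
    (v : E) : HasDerivAt (fun s => ⟪f s, v⟫) ⟪f', v⟫ x := by
  simpa using hf.inner ℝ (hasDerivAt_const x v)

theorem HasDerivAt.inner_smul_add_inner_smul {T M : ℝ → E} {t m : ℝ → F} {T' M' : E}
    {t' m' : F} {x : ℝ} (hT : HasDerivAt T T' x) (hM : HasDerivAt M M' x)
    (ht : HasDerivAt t t' x) (hm : HasDerivAt m m' x) (v : E) :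
    HasDerivAt (fun s => ⟪T s, v⟫ • t s + ⟪M s, v⟫ • m s)
      (⟪T x, v⟫ • t' + ⟪T', v⟫ • t x + (⟪M x, v⟫ • m' + ⟪M', v⟫ • m x)) x :=
  ((hT.inner_const_right v).smul ht).add ((hM.inner_const_right v).smul hm)

theorem hasDerivAt_inner_smul_add_inner_smul_of_darboux {T M : ℝ → E} {t m : ℝ → F} {n : F}
    {κc κn τg x : ℝ} (hT : HasDerivAt T (κc • M x) x) (hM : HasDerivAt M (-κc • T x) x)
    (ht : HasDerivAt t (κc • m x + κn • n) x) (hm : HasDerivAt m (-κc • t x + τg • n) x)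
    (v : E) :
    HasDerivAt (fun s => ⟪T s, v⟫ • t s + ⟪M s, v⟫ • m s)
      ((κn * ⟪T x, v⟫ + τg * ⟪M x, v⟫) • n) x := by
  convert hT.inner_smul_add_inner_smul hM ht hm v using 1
  simp only [neg_smul, inner_neg_left, real_inner_smul_left]
  module

end

/-- Equation (bQprep) of the paper, applied to an arbitrary fixed vector `v`:
for the rotation field `Q = t ⊗ T + m ⊗ M` built from the planar Darboux frame
`{T, M}` (with `T' = κ_c M`, `M' = −κ_c T`) and the image Darboux frame
`{t, m, n}` (with `t' = κ_c m + κ_n n`, `m' = −κ_c t + τ_g n`), one has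
`(Q v)' = (κ_n (T·v) + τ_g (M·v)) n`. -/
theorem stmt8
    (T M t m n : ℝ → EuclideanSpace ℝ (Fin 3))
    (κc κn τg : ℝ → ℝ) (α₀ : ℝ) (v : EuclideanSpace ℝ (Fin 3))
    (hT : DifferentiableAt ℝ T α₀) (hM : DifferentiableAt ℝ M α₀)
    (ht : DifferentiableAt ℝ t α₀) (hm : DifferentiableAt ℝ m α₀)
    (hT' : deriv T α₀ = κc α₀ • M α₀)
    (hM' : deriv M α₀ = -(κc α₀) • T α₀)
    (ht' : deriv t α₀ = κc α₀ • m α₀ + κn α₀ • n α₀)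
    (hm' : deriv m α₀ = -(κc α₀) • t α₀ + τg α₀ • n α₀) :
    deriv (fun s => ⟪T s, v⟫ • t s + ⟪M s, v⟫ • m s) α₀ =
      (κn α₀ * ⟪T α₀, v⟫ + τg α₀ * ⟪M α₀, v⟫) • n α₀ :=
  (hasDerivAt_inner_smul_add_inner_smul_of_darboux (hT' ▸ hT.hasDerivAt) (hM' ▸ hM.hasDerivAt)
    (ht' ▸ ht.hasDerivAt) (hm' ▸ hm.hasDerivAt) v).deriv
end

section
/- Let E = EuclideanSpace ℝ (Fin 3), let T, M : ℝ → E, let κ, g_t, g_m : ℝ → ℝ, and let α ∈ ℝ. Assume T, M, g_t, g_m are differentiable at α; that deriv T α = κ α • M α and deriv M α = −(κ α) • T α; and that g_t s ^ 2 + g_m s ^ 2 = 1 for all s in some neighborhood of α. Define f : ℝ → E by f s = g_t s • T s + g_m s • M s and set G = κ α − g_m α * deriv g_t α + g_t α * deriv g_m α. Then deriv f α = −G • (g_m α • T α − g_t α • M α). -/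
/-! Differentiating `f = g_t T + g_m M` with the frame equations gives
`f' = (g_t' - κ g_m) T + (κ g_t + g_m') M`. Since `g_t² + g_m² = 1` near `α`, also
`g_t g_t' + g_m g_m' = 0`, and these two relations turn the coefficients into
`-G g_m` and `G g_t`. -/

open Filter Topology

theorem mul_add_mul_eq_zero_of_sq_add_sq_eventuallyEq {u v : ℝ → ℝ} {a c u' v' : ℝ}
    (hu : HasDerivAt u u' a) (hv : HasDerivAt v v' a)
    (h : ∀ᶠ s in 𝓝 a, u s ^ 2 + v s ^ 2 = c) :
    u a * u' + v a * v' = 0 := by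
  have hderiv : HasDerivAt (fun s => u s ^ 2 + v s ^ 2) (2 * u a * u' + 2 * v a * v') a := by
    refine ((hu.fun_pow 2).add (hv.fun_pow 2)).congr_deriv ?_
    norm_num
  have hconst : HasDerivAt (fun s => u s ^ 2 + v s ^ 2) 0 a :=
    (hasDerivAt_const a c).congr_of_eventuallyEq h
  linarith [hderiv.unique hconst]

theorem HasDerivAt.smul_add_smul_of_frame {E : Type*} [NormedAddCommGroup E] [NormedSpace ℝ E]
    {T M : ℝ → E} {u v : ℝ → ℝ} {a k u' v' : ℝ}
    (hT : HasDerivAt T (k • M a) a) (hM : HasDerivAt M (-k • T a) a)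
    (hu : HasDerivAt u u' a) (hv : HasDerivAt v v' a) :
    HasDerivAt (fun s => u s • T s + v s • M s)
      ((u' - v a * k) • T a + (u a * k + v') • M a) a := by
  refine ((hu.smul hT).add (hv.smul hM)).congr_deriv ?_
  module

/-- Equation (f'repp) of the paper: for the planar Darboux frame `{T, M}` with
signed curvature `κ` (so `T' = κ M`, `M' = −κ T`) and the unit reference ruling
direction `f = g_t T + g_m M` (with `g_t² + g_m² = 1` near `α`), the derivative
is `f' = −G(g_m T − g_t M)`, where `G = κ − g_m g_t' + g_t g_m'`. -/
theorem stmt9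
    (T M : ℝ → EuclideanSpace ℝ (Fin 3)) (κ gt gm : ℝ → ℝ) (α : ℝ)
    (hT : DifferentiableAt ℝ T α) (hM : DifferentiableAt ℝ M α)
    (hgt : DifferentiableAt ℝ gt α) (hgm : DifferentiableAt ℝ gm α)
    (hT' : deriv T α = κ α • M α) (hM' : deriv M α = -(κ α) • T α)
    (hunit : ∀ᶠ s in nhds α, gt s ^ 2 + gm s ^ 2 = 1)
    (f : ℝ → EuclideanSpace ℝ (Fin 3))
    (hf : ∀ s, f s = gt s • T s + gm s • M s)
    (G : ℝ) (hG : G = κ α - gm α * deriv gt α + gt α * deriv gm α) :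
    deriv f α = -G • (gm α • T α - gt α • M α) := by
  obtain rfl : f = fun s => gt s • T s + gm s • M s := funext hf
  have hderiv := HasDerivAt.smul_add_smul_of_frame (hT' ▸ hT.hasDerivAt) (hM' ▸ hM.hasDerivAt)
    hgt.hasDerivAt hgm.hasDerivAt
  have hunit_α : gt α ^ 2 + gm α ^ 2 = 1 := hunit.self_of_nhds
  have horth := mul_add_mul_eq_zero_of_sq_add_sq_eventuallyEq hgt.hasDerivAt hgm.hasDerivAt hunit
  have hcoeff_T : deriv gt α - gm α * κ α = -G * gm α := by
    linear_combination gm α * hG + gt α * horth - deriv gt α * hunit_α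
  have hcoeff_M : gt α * κ α + deriv gm α = G * gt α := by
    linear_combination -gt α * hG + gm α * horth - deriv gm α * hunit_α
  rw [hderiv.deriv, hcoeff_T, hcoeff_M]
  module
end

section
/- Let ℝ³ = Fin 3 → ℝ with cross product ×. Let d, g : ℝ → ℝ³, let μ, β̂ : ℝ → ℝ, let α ∈ ℝ, let t, m ∈ ℝ³, and let g_t, g_m, G ∈ ℝ with g_t ^ 2 + g_m ^ 2 = 1. Assume: d is differentiable at α and at μ α; μ, β̂, g are differentiable at α; d (μ s) = d s + β̂ s • g s for all s in some neighborhood of α; deriv d α = t; g α = g_t • t + g_m • m; and deriv g α = −G • (g_m • t − g_t • m). Then deriv μ α • ((deriv d (μ α)) × g α) = (g_m − β̂ α * G) • (t × m). -/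
/-!
Differentiating `d ∘ μ = d + β̂ • g` at `α` gives `μ' d'(μ) = t + β̂ g' + β̂' g`. Crossing with `g`
kills the `β̂' g` term, and since `t`, `g'` and `g` are combinations of `t` and `m`, the cross product
is a 2×2 determinant times `t × m`; the unit relation `g_t² + g_m² = 1` reduces it to `g_m − β̂ G`.
-/

open Matrix Filter Topology

theorem smul_deriv_comp_eq_of_eventuallyEq {E : Type*} [NormedAddCommGroup E] [NormedSpace ℝ E]
    {d g : ℝ → E} {μ β : ℝ → ℝ} {α : ℝ}
    (hd : DifferentiableAt ℝ d α) (hdμ : DifferentiableAt ℝ d (μ α))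
    (hμ : DifferentiableAt ℝ μ α) (hβ : DifferentiableAt ℝ β α) (hg : DifferentiableAt ℝ g α)
    (hrel : ∀ᶠ s in 𝓝 α, d (μ s) = d s + β s • g s) :
    deriv μ α • deriv d (μ α) = deriv d α + β α • deriv g α + deriv β α • g α := by
  have hcomp : HasDerivAt (fun s => d (μ s)) (deriv μ α • deriv d (μ α)) α :=
    hdμ.hasDerivAt.scomp α hμ.hasDerivAt
  have hsum : HasDerivAt (fun s => d s + β s • g s)
      (deriv d α + (β α • deriv g α + deriv β α • g α)) α :=
    hd.hasDerivAt.add (hβ.hasDerivAt.smul hg.hasDerivAt)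
  rw [hcomp.unique (hsum.congr_of_eventuallyEq hrel), add_assoc]

theorem cross_smul_add_smul (a b c e : ℝ) (t m : Fin 3 → ℝ) :
    (a • t + b • m) ⨯₃ (c • t + e • m) = (a * e - b * c) • (t ⨯₃ m) := by
  simp only [map_add, map_smul, LinearMap.add_apply, LinearMap.smul_apply, cross_self,
    ← cross_anticomm m t]
  module

/-- Equation (muTcond1) of the paper: differentiating the ruling-endpoint
relation `d(μ(s)) = d(s) + β̂(s) g(s)` and crossing with `g(α)` yields
`μ'(α) (d'(μ(α)) × g(α)) = (g_m − β̂(α)G) (t × m)`, where `t = d'(α)`,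
`g(α) = g_t t + g_m m` with `g_t² + g_m² = 1`, and
`g'(α) = −G(g_m t − g_t m)`. -/
theorem stmt10
    (d g : ℝ → Fin 3 → ℝ) (μ βh : ℝ → ℝ) (α : ℝ)
    (t m : Fin 3 → ℝ) (gt gm G : ℝ) (hunit : gt ^ 2 + gm ^ 2 = 1)
    (hd : DifferentiableAt ℝ d α) (hdμ : DifferentiableAt ℝ d (μ α))
    (hμ : DifferentiableAt ℝ μ α) (hβ : DifferentiableAt ℝ βh α)
    (hgdiff : DifferentiableAt ℝ g α)
    (hrel : ∀ᶠ s in nhds α, d (μ s) = d s + βh s • g s)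
    (hderivd : deriv d α = t)
    (hgα : g α = gt • t + gm • m)
    (hg' : deriv g α = -G • (gm • t - gt • m)) :
    deriv μ α • ((deriv d (μ α)) ⨯₃ g α) = (gm - βh α * G) • (t ⨯₃ m) := by
  have key := smul_deriv_comp_eq_of_eventuallyEq hd hdμ hμ hβ hgdiff hrel
  set β' := deriv βh α
  calc deriv μ α • (deriv d (μ α) ⨯₃ g α) = (deriv μ α • deriv d (μ α)) ⨯₃ g α := by simp
    _ = ((1 - βh α * G * gm + β' * gt) • t + (βh α * G * gt + β' * gm) • m) ⨯₃
          (gt • t + gm • m) := by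
      rw [key, hderivd, hg', hgα]
      congr 2
      module
    _ = (gm - βh α * G) • (t ⨯₃ m) := by
      rw [cross_smul_add_smul]
      congr 1
      linear_combination (-(βh α * G)) * hunit
end

section
/- Let ℝ³ = Fin 3 → ℝ with the Euclidean dot product ⟪u, v⟫ = ∑ i, u i * v i and cross product ×. Let N, f₁, f₂, w, c₁, c₂ ∈ ℝ³ and b ∈ ℝ with ⟪N, N⟫ = 1, ⟪f₁, f₁⟫ = 1, ⟪f₂, f₂⟫ = 1, ⟪f₁, N⟫ = 0, ⟪f₂, N⟫ = 0, and b > 0. Define D = ⟪f₂ × N, f₁⟫, s = ⟪w, c₂ − c₁⟫, M₁ = ⟪f₁ × f₂, f₁ × f₂⟫, M₂ = s − b * D, and M₃ = s. Then (f₁ × f₂ = 0 ∨ s / D ≥ b ∨ s / D ≤ 0) ↔ M₁ * M₂ * M₃ ≥ 0 (division by zero being the Lean convention s / 0 = 0). -/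
/-!
Since `f₁` and `f₂` are orthogonal to the unit normal `N`, the vector `f₁ × f₂` is a multiple
of `N`, so `M₁ = |f₁ × f₂|² = D²` and `f₁ × f₂ = 0 ↔ D = 0`. For `D ≠ 0` and `t = s / D` one
has `M₁ M₂ M₃ = D⁴ (t - b) t`, which, as `b > 0`, is nonnegative exactly when `t ≥ b` or `t ≤ 0`.
-/

open Matrix

section CrossProduct

variable {R : Type*} [CommRing R]

theorem cross_cross_eq_zero_of_dotProduct_eq_zero {u v n : Fin 3 → R}
    (hu : u ⬝ᵥ n = 0) (hv : v ⬝ᵥ n = 0) : u ⨯₃ v ⨯₃ n = 0 := by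
  simp [cross_cross_eq_smul_sub_smul, hu, hv]

theorem dotProduct_self_eq_sq_of_cross_eq_zero {x n : Fin 3 → R}
    (hx : x ⨯₃ n = 0) (hn : n ⬝ᵥ n = 1) : x ⬝ᵥ x = (x ⬝ᵥ n) ^ 2 := by
  have h := cross_dot_cross x n x n
  rw [hx, zero_dotProduct, hn, dotProduct_comm n x] at h
  linear_combination -h

theorem cross_dotProduct_self_eq_sq_of_orthogonal {u v n : Fin 3 → R}
    (hu : u ⬝ᵥ n = 0) (hv : v ⬝ᵥ n = 0) (hn : n ⬝ᵥ n = 1) :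
    u ⨯₃ v ⬝ᵥ u ⨯₃ v = (v ⨯₃ n ⬝ᵥ u) ^ 2 := by
  rw [dotProduct_self_eq_sq_of_cross_eq_zero (cross_cross_eq_zero_of_dotProduct_eq_zero hu hv) hn,
    dotProduct_comm _ u, triple_product_permutation, triple_product_permutation,
    dotProduct_comm n]

end CrossProduct

section Scalar

variable {K : Type*} [Field K] [LinearOrder K] [IsStrictOrderedRing K]

theorem sub_mul_self_nonneg_iff {b t : K} (hb : 0 < b) :
    0 ≤ (t - b) * t ↔ b ≤ t ∨ t ≤ 0 := by
  constructor
  · intro h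
    by_contra! hc
    nlinarith
  · rintro (h | h) <;> nlinarith

theorem div_ge_or_div_nonpos_iff {b d s : K} (hb : 0 < b) :
    (d = 0 ∨ s / d ≥ b ∨ s / d ≤ 0) ↔ d ^ 2 * (s - b * d) * s ≥ 0 := by
  rcases eq_or_ne d 0 with rfl | hd
  · simp
  obtain ⟨t, rfl⟩ : ∃ t, s = t * d := ⟨s / d, (div_mul_cancel₀ s hd).symm⟩
  have hform : d ^ 2 * (t * d - b * d) * (t * d) = d ^ 4 * ((t - b) * t) := by ring
  simp only [ge_iff_le]
  rw [mul_div_cancel_right₀ t hd, hform, mul_nonneg_iff_of_pos_left (by positivity),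
    sub_mul_self_nonneg_iff hb]
  simp [hd]

end Scalar

theorem stmt14_general (N f₁ f₂ : Fin 3 → ℝ) (b : ℝ)
    (hN : dot3 N N = 1)
    (hf₁N : dot3 f₁ N = 0) (hf₂N : dot3 f₂ N = 0) (hb : 0 < b)
    (D s M₁ M₂ M₃ : ℝ)
    (hD : D = dot3 (f₂ ⨯₃ N) f₁)
    (hM₁ : M₁ = dot3 (f₁ ⨯₃ f₂) (f₁ ⨯₃ f₂))
    (hM₂ : M₂ = s - b * D) (hM₃ : M₃ = s) :
    (f₁ ⨯₃ f₂ = 0 ∨ s / D ≥ b ∨ s / D ≤ 0) ↔ M₁ * M₂ * M₃ ≥ 0 := by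
  simp only [dot3_eq_dotProduct] at *
  have hM₁D : M₁ = D ^ 2 := by
    rw [hM₁, hD]
    exact cross_dotProduct_self_eq_sq_of_orthogonal hf₁N hf₂N hN
  have hcross : f₁ ⨯₃ f₂ = 0 ↔ D = 0 := by
    rw [← dotProduct_self_eq_zero, ← hM₁, hM₁D, pow_eq_zero_iff two_ne_zero]
  rw [hcross, hM₁D, hM₂, hM₃]
  exact div_ge_or_div_nonpos_iff hb

/-- The paper's final proposition: one of the non-crossing conditions
M2.1: `f₁ × f₂ = 0`, M2.2: `s / D ≥ b`, M2.3: `s / D ≤ 0` holds if and only if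
`M₁ M₂ M₃ ≥ 0`, where `D = (f₂ × N)·f₁`, `s = w·(c₂ − c₁)`,
`M₁ = |f₁ × f₂|²`, `M₂ = s − bD`, `M₃ = s` (division by zero following the
Lean convention `s / 0 = 0`). -/
theorem stmt14 (N f₁ f₂ w c₁ c₂ : Fin 3 → ℝ) (b : ℝ)
    (hN : dot3 N N = 1) (hf₁ : dot3 f₁ f₁ = 1) (hf₂ : dot3 f₂ f₂ = 1)
    (hf₁N : dot3 f₁ N = 0) (hf₂N : dot3 f₂ N = 0) (hb : 0 < b)
    (D s M₁ M₂ M₃ : ℝ)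
    (hD : D = dot3 (f₂ ⨯₃ N) f₁)
    (hs : s = dot3 w (c₂ - c₁))
    (hM₁ : M₁ = dot3 (f₁ ⨯₃ f₂) (f₁ ⨯₃ f₂))
    (hM₂ : M₂ = s - b * D) (hM₃ : M₃ = s) :
    (f₁ ⨯₃ f₂ = 0 ∨ s / D ≥ b ∨ s / D ≤ 0) ↔ M₁ * M₂ * M₃ ≥ 0 :=
  stmt14_general N f₁ f₂ b hN hf₁N hf₂N hb D s M₁ M₂ M₃ hD hM₁ hM₂ hM₃
end

section
/- Let E be a real inner product space, let c, f : ℝ → E, and let α ∈ ℝ. Assume c is differentiable at α, f is differentiable on a neighborhood of α with derivative f' (so f' s = deriv f s there), f' is continuous at α, and deriv f α ≠ 0. Then the function α' ↦ ⟪deriv f α', c α' − c α⟫ / ⟪deriv f α', f α − f α'⟫ tends to −⟪deriv f α, deriv c α⟫ / ‖deriv f α‖ ^ 2 as α' tends to α within α' ≠ α (the punctured neighborhood filter 𝓝[≠] α). -/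
open Topology

open scoped RealInnerProductSpace

/-- The limit in the passage from equation (cor6c) to (prop3.1) of the paper:
the intersection parameter of nearby ruling lines,
`f'(α')·(c(α')−c(α)) / (f'(α')·(f(α)−f(α')))`, converges to
`−f'(α)·c'(α)/|f'(α)|²` as `α' → α` with `α' ≠ α`. -/
theorem stmt16 {E : Type*} [NormedAddCommGroup E] [InnerProductSpace ℝ E]
    (c f : ℝ → E) (α : ℝ)
    (hc : DifferentiableAt ℝ c α)
    (f' : ℝ → E)
    (hf : ∀ᶠ s in 𝓝 α, HasDerivAt f (f' s) s)
    (hf'cont : ContinuousAt f' α)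
    (hne : deriv f α ≠ 0) :
    Filter.Tendsto
      (fun α' => ⟪deriv f α', c α' - c α⟫ / ⟪deriv f α', f α - f α'⟫)
      (𝓝[≠] α) (𝓝 (-⟪deriv f α, deriv c α⟫ / ‖deriv f α‖ ^ 2)) := by
  have hfα : HasDerivAt f (f' α) α := hf.self_of_nhds
  have hEq : deriv f =ᶠ[𝓝 α] f' := hf.mono fun s hs => hs.deriv
  have hdfα : deriv f α = f' α := hfα.deriv
  have hderiv_tendsto : Filter.Tendsto (deriv f) (𝓝[≠] α) (𝓝 (deriv f α)) := by
    rw [hdfα]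
    exact (hf'cont.tendsto.congr' hEq.symm).mono_left nhdsWithin_le_nhds
  have hslope_c : Filter.Tendsto (slope c α) (𝓝[≠] α) (𝓝 (deriv c α)) :=
    hasDerivAt_iff_tendsto_slope.mp hc.hasDerivAt
  have hslope_f : Filter.Tendsto (slope f α) (𝓝[≠] α) (𝓝 (deriv f α)) := by
    rw [hdfα]; exact hasDerivAt_iff_tendsto_slope.mp hfα
  have hnum : Filter.Tendsto (fun α' => ⟪deriv f α', slope c α α'⟫)
      (𝓝[≠] α) (𝓝 ⟪deriv f α, deriv c α⟫) := hderiv_tendsto.inner hslope_c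
  have hden : Filter.Tendsto (fun α' => ⟪deriv f α', -slope f α α'⟫)
      (𝓝[≠] α) (𝓝 ⟪deriv f α, -deriv f α⟫) := hderiv_tendsto.inner hslope_f.neg
  have hden_ne : ⟪deriv f α, -(deriv f α)⟫ ≠ 0 := by
    rw [inner_neg_right, real_inner_self_eq_norm_sq]
    simpa using pow_ne_zero 2 (norm_ne_zero_iff.mpr hne)
  have hlim := hnum.div hden hden_ne
  have hval : ⟪deriv f α, deriv c α⟫ / ⟪deriv f α, -(deriv f α)⟫
      = -⟪deriv f α, deriv c α⟫ / ‖deriv f α‖ ^ 2 := by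
    rw [inner_neg_right, real_inner_self_eq_norm_sq, div_neg, neg_div]
  rw [← hval]
  refine hlim.congr' ?_
  filter_upwards [self_mem_nhdsWithin] with α' hα'
  have ht : (α' - α) ≠ 0 := sub_ne_zero.mpr hα'
  have ht' : (α' - α)⁻¹ ≠ 0 := inv_ne_zero ht
  simp only [Pi.div_apply, slope_def_module, ← smul_neg, neg_sub, real_inner_smul_right]
  rw [mul_div_mul_left _ _ ht']
end
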